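/- arXiv:1002.1829 — 3 statements merged into one kernel-verified Lean document; each statement's English description precedes it below -/
import Mathlib

section
/- Let M be a symmetric positive-definite d×d real matrix and let v_1, …, v_{2n} be vectors in ℝ^d. Set v = ( ∑_{k=1}^{n} v_k − ∑_{k=n+1}^{2n} v_k ) / 2. Then ∑_{k=1}^{2n} det(M + Q_{v_k})^{1/2} ≥ 2 · det(M + Q_v)^{1/2}, where for a vector w ∈ ℝ^d, Q_w denotes the d×d matrix with entries (Q_w)_{ij} = w_i w_j (the outer product w wᵀ). Moreover, equality holds if and only if n = 1 and v_1 = −v_2. -/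
/-!
By the matrix determinant lemma `det (M + Q w) = det M · (1 + wᵀ M⁻¹ w)`, and writing the form
`wᵀ M⁻¹ w` as `‖B w‖²` gives `√det (M + Q w) = √det M · ‖(1, B w)‖`, a Euclidean norm in
`ℝ × ℝᵈ`. Replacing `v k` by `-v k` for `k ≥ n` changes no summand, and the resulting vectors
`x_k` sum to `2 v`, so the triangle inequality gives
`∑ ‖(1, B x_k)‖ ≥ ‖(2n, 2 B v)‖ ≥ ‖(2, 2 B v)‖ = 2 ‖(1, B v)‖`.
Equality in the middle step forces `n = 1`; then equality in the triangle inequality for two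
vectors with the same first coordinate `1` forces them to coincide.
-/

/-- `Q w` is the rank-one matrix with entries `(Q w) i j = w i * w j`. -/
def outerQ {d : ℕ} (w : Fin d → ℝ) : Matrix (Fin d) (Fin d) ℝ :=
  Matrix.vecMulVec w w

section LiftedNorm

variable {F : Type*} [NormedAddCommGroup F]

theorem norm_toLp_prod (a : ℝ) (y : F) :
    ‖WithLp.toLp 2 (a, y)‖ = √(a ^ 2 + ‖y‖ ^ 2) := by
  rw [WithLp.prod_norm_eq_of_L2, WithLp.toLp_fst, WithLp.toLp_snd, Real.norm_eq_abs, sq_abs]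

theorem sqrt_card_sq_add_norm_sum_sq_le {ι : Type*} [Fintype ι] (y : ι → F) :
    √((Fintype.card ι : ℝ) ^ 2 + ‖∑ i, y i‖ ^ 2) ≤ ∑ i, √(1 + ‖y i‖ ^ 2) := by
  have hsum : ∑ i, WithLp.toLp 2 ((1 : ℝ), y i) =
      WithLp.toLp 2 ((Fintype.card ι : ℝ), ∑ i, y i) := by
    rw [← WithLp.toLp_sum]
    congr 1
    ext <;> simp [Prod.fst_sum, Prod.snd_sum]
  simpa only [norm_toLp_prod, one_pow, hsum] using
    norm_sum_le Finset.univ fun i => WithLp.toLp 2 ((1 : ℝ), y i)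

section NormedSpace

variable [NormedSpace ℝ F]

theorem two_mul_sqrt_one_add_norm_half_smul_sq (s : F) :
    2 * √(1 + ‖(1 / 2 : ℝ) • s‖ ^ 2) = √(2 ^ 2 + ‖s‖ ^ 2) := by
  have hsq : (2 : ℝ) ^ 2 + ‖s‖ ^ 2 = 2 ^ 2 * (1 + ‖(1 / 2 : ℝ) • s‖ ^ 2) := by
    rw [norm_smul]
    norm_num
    ring
  rw [hsq, Real.sqrt_mul' _ (by positivity), Real.sqrt_sq zero_le_two, mul_comm]

theorem two_mul_sqrt_one_add_norm_sq_le_sum {n : ℕ} (hn : 0 < n) (y : Fin (2 * n) → F) :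
    2 * √(1 + ‖(1 / 2 : ℝ) • ∑ k, y k‖ ^ 2) ≤ ∑ k, √(1 + ‖y k‖ ^ 2) :=
  calc 2 * √(1 + ‖(1 / 2 : ℝ) • ∑ k, y k‖ ^ 2) = √(2 ^ 2 + ‖∑ k, y k‖ ^ 2) :=
        two_mul_sqrt_one_add_norm_half_smul_sq _
    _ ≤ √((Fintype.card (Fin (2 * n)) : ℝ) ^ 2 + ‖∑ k, y k‖ ^ 2) := by
        gcongr
        simp only [Fintype.card_fin]
        exact_mod_cast (by omega : 2 ≤ 2 * n)
    _ ≤ ∑ k, √(1 + ‖y k‖ ^ 2) := sqrt_card_sq_add_norm_sum_sq_le y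

end NormedSpace

section InnerProductSpace

variable [InnerProductSpace ℝ F]

theorem sqrt_one_add_norm_sq_add_eq_iff (a b : F) :
    √(1 + ‖a‖ ^ 2) + √(1 + ‖b‖ ^ 2) = 2 * √(1 + ‖(1 / 2 : ℝ) • (a + b)‖ ^ 2) ↔ a = b := by
  let lift : F → WithLp 2 (ℝ × F) := fun y => WithLp.toLp 2 (1, y)
  have hlift (y : F) : ‖lift y‖ = √(1 + ‖y‖ ^ 2) := by
    rw [norm_toLp_prod, one_pow]
  have hadd : ‖lift a + lift b‖ = 2 * √(1 + ‖(1 / 2 : ℝ) • (a + b)‖ ^ 2) := by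
    rw [two_mul_sqrt_one_add_norm_half_smul_sq, ← WithLp.toLp_add, norm_toLp_prod]
    norm_num
  constructor
  · intro h
    rw [← hlift, ← hlift, ← hadd, eq_comm, ← sameRay_iff_norm_add] at h
    obtain ⟨r, s, hr, -, hrs⟩ := h.exists_pos (by simp [lift]) (by simp [lift])
    have hrs_eq : r = s := by simpa [lift] using congrArg (fun p => p.fst) hrs
    subst hrs_eq
    simpa [lift, hr.ne'] using congrArg (fun p => p.snd) hrs
  · rintro rfl
    rw [← two_smul ℝ a, smul_smul]
    norm_num
    ring

theorem sum_sqrt_one_add_norm_sq_eq_iff {n : ℕ} (hn : 0 < n) (y : Fin (2 * n) → F) :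
    ∑ k, √(1 + ‖y k‖ ^ 2) = 2 * √(1 + ‖(1 / 2 : ℝ) • ∑ k, y k‖ ^ 2) ↔
      n = 1 ∧ y ⟨0, by omega⟩ = y ⟨1, by omega⟩ := by
  have hpair (z : Fin 2 → F) :
      ∑ k, √(1 + ‖z k‖ ^ 2) = 2 * √(1 + ‖(1 / 2 : ℝ) • ∑ k, z k‖ ^ 2) ↔ z 0 = z 1 := by
    simpa only [Fin.sum_univ_two] using sqrt_one_add_norm_sq_add_eq_iff (z 0) (z 1)
  constructor
  · intro h
    have hn1 : n = 1 := by
      by_contra hne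
      have hlt : √(2 ^ 2 + ‖∑ k, y k‖ ^ 2) <
          √((Fintype.card (Fin (2 * n)) : ℝ) ^ 2 + ‖∑ k, y k‖ ^ 2) := by
        gcongr
        simp only [Fintype.card_fin]
        exact_mod_cast (by omega : 2 < 2 * n)
      rw [two_mul_sqrt_one_add_norm_half_smul_sq] at h
      linarith [sqrt_card_sq_add_norm_sum_sq_le y]
    subst hn1
    exact ⟨rfl, (hpair y).mp h⟩
  · rintro ⟨rfl, h⟩
    exact (hpair y).mpr h

end InnerProductSpace

end LiftedNorm

section Matrix

open Matrix

open scoped MatrixOrder in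
theorem Matrix.PosDef.exists_injective_linearMap_dotProduct_mulVec_eq_norm_sq {n : Type*}
    [Fintype n] [DecidableEq n] {A : Matrix n n ℝ} (hA : A.PosDef) :
    ∃ L : (n → ℝ) →ₗ[ℝ] EuclideanSpace ℝ n,
      Function.Injective L ∧ ∀ w, w ⬝ᵥ A *ᵥ w = ‖L w‖ ^ 2 := by
  obtain ⟨B, hB⟩ := CStarAlgebra.nonneg_iff_eq_star_mul_self.mp hA.posSemidef.nonneg
  have hquad (w : n → ℝ) : w ⬝ᵥ A *ᵥ w = ‖WithLp.toLp 2 (B *ᵥ w)‖ ^ 2 := by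
    rw [EuclideanSpace.norm_sq_eq, hB, star_eq_conjTranspose, ← mulVec_mulVec, dotProduct_mulVec,
      vecMul_conjTranspose]
    simp [dotProduct, sq]
  refine ⟨(WithLp.linearEquiv 2 ℝ (n → ℝ)).symm.toLinearMap ∘ₗ B.mulVecLin, ?_, hquad⟩
  rw [← LinearMap.ker_eq_bot, LinearMap.ker_eq_bot']
  intro w hw
  by_contra hne
  have hpos := hA.dotProduct_mulVec_pos hne
  rw [star_trivial, hquad] at hpos
  exact hpos.ne' (by simpa using hw)

theorem det_add_outerQ {d : ℕ} {M : Matrix (Fin d) (Fin d) ℝ} (hM : IsUnit M.det)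
    (w : Fin d → ℝ) : (M + outerQ w).det = M.det * (1 + w ⬝ᵥ M⁻¹ *ᵥ w) := by
  rw [outerQ, vecMulVec_eq Unit, det_add_replicateCol_mul_replicateRow hM]
  congr 1
  rw [← replicateRow_vecMul, det_unique, Matrix.add_apply, one_apply_eq,
    replicateRow_mul_replicateCol_apply, dotProduct_mulVec]

end Matrix

theorem stmt_1 (d n : ℕ) (hn : 1 ≤ n)
    (M : Matrix (Fin d) (Fin d) ℝ) (hM : M.PosDef)
    (v : Fin (2 * n) → (Fin d → ℝ)) :
    2 * Real.sqrt (Matrix.det (M + outerQ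
        ((1 / 2 : ℝ) • ∑ k : Fin (2 * n), if (k : ℕ) < n then v k else -v k))) ≤
      ∑ k : Fin (2 * n), Real.sqrt (Matrix.det (M + outerQ (v k))) ∧
    ((∑ k : Fin (2 * n), Real.sqrt (Matrix.det (M + outerQ (v k))) =
        2 * Real.sqrt (Matrix.det (M + outerQ
          ((1 / 2 : ℝ) • ∑ k : Fin (2 * n), if (k : ℕ) < n then v k else -v k)))) ↔
      (n = 1 ∧ v ⟨0, by omega⟩ = -v ⟨1, by omega⟩)) := by
  obtain ⟨L, hLinj, hL⟩ := hM.inv.exists_injective_linearMap_dotProduct_mulVec_eq_norm_sq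
  have hdet (w : Fin d → ℝ) : √(M + outerQ w).det = √M.det * √(1 + ‖L w‖ ^ 2) := by
    rw [det_add_outerQ hM.det_pos.ne'.isUnit, hL, Real.sqrt_mul hM.det_pos.le]
  set x : Fin (2 * n) → Fin d → ℝ := fun k => if (k : ℕ) < n then v k else -v k
  have hx (k : Fin (2 * n)) : √(M + outerQ (v k)).det = √M.det * √(1 + ‖L (x k)‖ ^ 2) := by
    rw [hdet]
    dsimp only [x]
    split_ifs <;> simp
  have hmean : L ((1 / 2 : ℝ) • ∑ k, x k) = (1 / 2 : ℝ) • ∑ k, L (x k) := by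
    rw [map_smul, map_sum]
  have hc : 0 < √M.det := Real.sqrt_pos.mpr hM.det_pos
  simp only [hx, hdet, hmean, ← Finset.mul_sum]
  rw [mul_left_comm, mul_le_mul_iff_right₀ hc, mul_right_inj' hc.ne',
    sum_sqrt_one_add_norm_sq_eq_iff hn]
  refine ⟨two_mul_sqrt_one_add_norm_sq_le_sum hn _, and_congr_right fun hn1 => ?_⟩
  subst hn1
  rw [hLinj.eq_iff]
  simp [x]
end

section
/- Let ν₁ be the measure on ℝ^d with density e^{|x_1| + |x_2| + ⋯ + |x_d|} with respect to Lebesgue measure. Then for every bounded open set A ⊂ ℝ^d with smooth boundary, ν₁⁺(∂A) ≥ √d · ν₁(A). -/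
open MeasureTheory Metric Filter Set
open scoped ENNReal

/-- The (lower outer) surface measure `μ⁺(∂A) = liminf_{ε→0⁺} (μ(A^ε) − μ(A))/ε`,
where `A^ε` is the open `ε`-neighborhood of `A`. -/
noncomputable def surfaceMeasure {X : Type*} [PseudoEMetricSpace X] [MeasurableSpace X]
    (μ : Measure X) (A : Set X) : ℝ≥0∞ :=
  Filter.liminf (fun ε : ℝ => (μ (Metric.thickening ε A) - μ A) / ENNReal.ofReal ε)
    (nhdsWithin 0 (Set.Ioi 0))

/-- `A` has smooth boundary: near every boundary point, `A` is the sublevel set of a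
smooth function with nonvanishing differential. -/
def HasSmoothBoundary {d : ℕ} (A : Set (EuclideanSpace ℝ (Fin d))) : Prop :=
  ∀ x ∈ frontier A, ∃ U : Set (EuclideanSpace ℝ (Fin d)), IsOpen U ∧ x ∈ U ∧
    ∃ g : EuclideanSpace ℝ (Fin d) → ℝ, ContDiff ℝ (⊤ : ℕ∞) g ∧ (∀ y ∈ U, fderiv ℝ g y ≠ 0) ∧
      A ∩ U = {y | g y < 0} ∩ U


noncomputable def dens (d : ℕ) (x : EuclideanSpace ℝ (Fin d)) : ℝ≥0∞ :=
  ENNReal.ofReal (Real.exp (∑ i, |x i|))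

lemma continuous_dens (d : ℕ) : Continuous (dens d) := by
  apply ENNReal.continuous_ofReal.comp
  apply Real.continuous_exp.comp
  exact continuous_finset_sum _ fun i _ => (EuclideanSpace.proj i).continuous.abs

lemma measurable_dens (d : ℕ) : Measurable (dens d) := (continuous_dens d).measurable

/-- orthant determined by sign pattern `s` -/
def orth (d : ℕ) (s : Fin d → Bool) : Set (EuclideanSpace ℝ (Fin d)) :=
  {x | ∀ i, if s i then 0 < x i else x i < 0}

lemma isOpen_orth (d : ℕ) (s : Fin d → Bool) : IsOpen (orth d s) := by
  have : orth d s = ⋂ i, (if s i then {x : EuclideanSpace ℝ (Fin d) | 0 < x i}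
      else {x | x i < 0}) := by
    ext x; simp only [orth, mem_setOf_eq, mem_iInter]
    refine forall_congr' fun i => ?_
    by_cases h : s i <;> simp [h]
  rw [this]
  apply isOpen_iInter_of_finite
  intro i
  by_cases h : s i <;> simp only [h, if_true, if_false]
  · exact isOpen_lt continuous_const (EuclideanSpace.proj i).continuous
  · exact isOpen_lt (EuclideanSpace.proj i).continuous continuous_const

/-- the shift vector -/
noncomputable def shiftv (d : ℕ) (c : ℝ) (s : Fin d → Bool) : EuclideanSpace ℝ (Fin d) :=
  WithLp.toLp 2 (fun i => if s i then c else -c)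

lemma shiftv_apply (d : ℕ) (c : ℝ) (s : Fin d → Bool) (i : Fin d) :
    shiftv d c s i = if s i then c else -c := rfl

lemma norm_shiftv (d : ℕ) (c : ℝ) (hc : 0 ≤ c) (s : Fin d → Bool) :
    ‖shiftv d c s‖ = Real.sqrt d * c := by
  rw [EuclideanSpace.norm_eq]
  have : ∀ i, ‖shiftv d c s i‖ ^ 2 = c ^ 2 := by
    intro i; rw [shiftv_apply]; by_cases h : s i <;> simp [h, sq_abs]
  rw [Finset.sum_congr rfl fun i _ => this i, Finset.sum_const, Finset.card_univ,
    Fintype.card_fin, nsmul_eq_mul,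
    Real.sqrt_mul (by positivity : (0:ℝ) ≤ (d:ℝ)), Real.sqrt_sq hc]

theorem key (d : ℕ) (hd : 0 < d) (A : Set (EuclideanSpace ℝ (Fin d))) (hA : MeasurableSet A)
    {θ ε : ℝ} (hθ0 : 0 < θ) (hθ1 : θ < 1) (hε : 0 < ε) :
    ENNReal.ofReal (Real.exp (Real.sqrt d * (θ * ε))) * (volume.withDensity (dens d)) A
      ≤ (volume.withDensity (dens d)) (thickening ε A) := by
  set μ := volume.withDensity (dens d) with hμ
  have hsd : (0:ℝ) < Real.sqrt d := Real.sqrt_pos.2 (by exact_mod_cast hd)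
  set c : ℝ := θ * ε / Real.sqrt d with hc
  have hc0 : 0 < c := by positivity
  -- the translated pieces
  set T : (Fin d → Bool) → Set (EuclideanSpace ℝ (Fin d)) :=
    fun s => (fun y => y - shiftv d c s) ⁻¹' (A ∩ orth d s) with hT
  have hmeas_orth : ∀ s, MeasurableSet (orth d s) := fun s => (isOpen_orth d s).measurableSet
  have hTmeas : ∀ s, MeasurableSet (T s) := by
    intro s
    exact (measurable_id.sub_const _) (hA.inter (hmeas_orth s))
  have hnormv : ∀ s, ‖shiftv d c s‖ = θ * ε := by
    intro s
    rw [norm_shiftv d c hc0.le s, hc, mul_div_cancel₀ _ (ne_of_gt hsd)]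
  -- each translated piece is inside the thickening
  have hTsub : ∀ s, T s ⊆ thickening ε A := by
    intro s y hy
    rw [mem_thickening_iff]
    exact ⟨y - shiftv d c s, hy.1, by
      rw [dist_eq_norm, sub_sub_cancel, hnormv s]
      nlinarith⟩
  -- pairwise disjoint
  have hTdisj : Pairwise (Function.onFun Disjoint T) := by
    intro s t hst
    rw [Function.onFun, Set.disjoint_left]
    rintro y hys hyt
    obtain ⟨i, hi⟩ := Function.ne_iff.1 hst
    have h1 := hys.2 i
    have h2 := hyt.2 i
    have h1' : if s i = true then 0 < y i - shiftv d c s i else y i - shiftv d c s i < 0 := h1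
    have h2' : if t i = true then 0 < y i - shiftv d c t i else y i - shiftv d c t i < 0 := h2
    rw [shiftv_apply] at h1'
    rw [shiftv_apply] at h2'
    cases hs : s i <;> cases ht : t i <;> rw [hs] at h1' hi <;> rw [ht] at h2' hi <;>
      simp_all <;> linarith [div_pos (mul_pos hθ0 hε) (Real.sqrt_pos.2 (Nat.cast_pos.2 hd))]
  -- measure of each piece
  have hTmeasure : ∀ s, μ (T s)
      = ENNReal.ofReal (Real.exp (d * c)) * μ (A ∩ orth d s) := by
    intro s
    have hmp : MeasurePreserving (fun y : EuclideanSpace ℝ (Fin d) => y - shiftv d c s)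
        volume volume := measurePreserving_sub_right volume _
    have hemb : MeasurableEmbedding (fun y : EuclideanSpace ℝ (Fin d) => y - shiftv d c s) :=
      (MeasurableEquiv.subRight (shiftv d c s)).measurableEmbedding
    rw [hμ, withDensity_apply _ (hTmeas s), withDensity_apply _ (hA.inter (hmeas_orth s))]
    rw [hT]
    set v := shiftv d c s with hv
    set F : EuclideanSpace ℝ (Fin d) → ℝ≥0∞ := fun x => dens d (x + v) with hF
    have step1 : ∫⁻ y in (fun y => y - v) ⁻¹' (A ∩ orth d s), dens d y ∂volume
        = ∫⁻ y in (fun y => y - v) ⁻¹' (A ∩ orth d s), F (y - v) ∂volume := by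
      apply lintegral_congr
      intro y
      rw [hF]
      simp [sub_add_cancel]
    have step2 : ∫⁻ y in (fun y => y - v) ⁻¹' (A ∩ orth d s), F (y - v) ∂volume
        = ∫⁻ x in A ∩ orth d s, F x ∂volume :=
      hmp.setLIntegral_comp_preimage_emb hemb F (A ∩ orth d s)
    have step3 : ∫⁻ x in A ∩ orth d s, F x ∂volume
        = ∫⁻ x in A ∩ orth d s, ENNReal.ofReal (Real.exp (d * c)) * dens d x ∂volume := by
      apply setLIntegral_congr_fun (hA.inter (hmeas_orth s))
      intro x hx
      have habs : ∀ i, |(x + v) i| = |x i| + c := by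
        intro i
        have hxi : (x + v) i = x i + v i := rfl
        have h := hx.2 i
        rw [hxi, hv, shiftv_apply]
        by_cases hsi : s i
        · rw [hsi] at h ⊢
          simp only [if_true]
          rw [abs_of_pos (by simp at h; linarith), abs_of_pos (by simpa using h)]
        · rw [eq_false_of_ne_true hsi] at h ⊢
          simp only [Bool.false_eq_true, if_false] at h ⊢
          rw [abs_of_neg (by linarith), abs_of_neg h]
          ring
      rw [hF]
      simp only [dens]
      rw [Finset.sum_congr rfl fun i _ => habs i, Finset.sum_add_distrib,
        Finset.sum_const, Finset.card_univ, Fintype.card_fin, nsmul_eq_mul,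
        Real.exp_add, mul_comm (Real.exp _) (Real.exp ((d:ℝ) * c)),
        ENNReal.ofReal_mul (Real.exp_pos _).le]
    rw [step1, step2, step3, lintegral_const_mul _ (measurable_dens d)]
  -- hyperplanes are null
  have hplane : ∀ i : Fin d, μ {x : EuclideanSpace ℝ (Fin d) | x i = 0} = 0 := by
    intro i
    apply withDensity_absolutelyContinuous volume (dens d)
    have h : {x : EuclideanSpace ℝ (Fin d) | x i = 0}
        = (LinearMap.ker ((EuclideanSpace.proj i : EuclideanSpace ℝ (Fin d) →L[ℝ] ℝ) :
            EuclideanSpace ℝ (Fin d) →ₗ[ℝ] ℝ) : Submodule ℝ (EuclideanSpace ℝ (Fin d))) := by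
      ext x; simp [LinearMap.mem_ker]
    rw [h]
    apply Measure.addHaar_submodule
    intro htop
    have h1 : EuclideanSpace.single i (1:ℝ) ∈ (⊤ : Submodule ℝ (EuclideanSpace ℝ (Fin d))) :=
      Submodule.mem_top
    rw [← htop, LinearMap.mem_ker] at h1
    simp at h1
  -- A is covered by the orthant pieces up to null sets
  have hcover : A ⊆ (⋃ s, A ∩ orth d s) ∪ ⋃ i, {x : EuclideanSpace ℝ (Fin d) | x i = 0} := by
    intro x hxA
    by_cases hx0 : ∃ i, x i = 0
    · exact Or.inr (mem_iUnion.2 ⟨hx0.choose, hx0.choose_spec⟩)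
    · push_neg at hx0
      refine Or.inl (mem_iUnion.2 ⟨fun i => decide (0 < x i), hxA, fun i => ?_⟩)
      rcases lt_trichotomy (x i) 0 with h|h|h
      · simp [not_lt.2 h.le, h]
      · exact absurd h (hx0 i)
      · simp [h]
  have hsum : μ A ≤ ∑' s, μ (A ∩ orth d s) := by
    calc μ A ≤ μ ((⋃ s, A ∩ orth d s) ∪ ⋃ i, {x : EuclideanSpace ℝ (Fin d) | x i = 0}) :=
          measure_mono hcover
      _ ≤ μ (⋃ s, A ∩ orth d s) + μ (⋃ i, {x : EuclideanSpace ℝ (Fin d) | x i = 0}) :=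
          measure_union_le _ _
      _ = μ (⋃ s, A ∩ orth d s) := by rw [measure_iUnion_null fun i => hplane i, add_zero]
      _ ≤ ∑' s, μ (A ∩ orth d s) := measure_iUnion_le _
  have hdc : (d:ℝ) * c = Real.sqrt d * (θ * ε) := by
    have h2 : (d:ℝ) = Real.sqrt d * Real.sqrt d :=
      (Real.mul_self_sqrt (Nat.cast_nonneg d)).symm
    rw [hc, h2]
    rw [Real.sqrt_mul_self hsd.le, mul_assoc, mul_div_cancel₀ _ hsd.ne']
  calc ENNReal.ofReal (Real.exp (Real.sqrt d * (θ * ε))) * μ A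
      ≤ ENNReal.ofReal (Real.exp ((d:ℝ) * c)) * ∑' s, μ (A ∩ orth d s) := by
        rw [hdc]; exact mul_le_mul_right hsum _
    _ = ∑' s, μ (T s) := by
        rw [ENNReal.tsum_mul_left.symm]
        exact tsum_congr fun s => (hTmeasure s).symm
    _ = μ (⋃ s, T s) := (measure_iUnion hTdisj hTmeas).symm
    _ ≤ μ (thickening ε A) := measure_mono (iUnion_subset hTsub)

theorem stmt_7 (d : ℕ) (A : Set (EuclideanSpace ℝ (Fin d)))
    (hAbd : Bornology.IsBounded A) (hAopen : IsOpen A) (hAsm : HasSmoothBoundary A) :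
    ENNReal.ofReal (Real.sqrt d) *
        (volume.withDensity fun x : EuclideanSpace ℝ (Fin d) =>
          ENNReal.ofReal (Real.exp (∑ i, |x i|))) A ≤
      surfaceMeasure (volume.withDensity fun x : EuclideanSpace ℝ (Fin d) =>
        ENNReal.ofReal (Real.exp (∑ i, |x i|))) A := by
  rcases Nat.eq_zero_or_pos d with rfl | hd
  · simp
  have hμeq : (volume.withDensity fun x : EuclideanSpace ℝ (Fin d) =>
      ENNReal.ofReal (Real.exp (∑ i, |x i|))) = volume.withDensity (dens d) := rfl
  rw [hμeq]
  set μ := volume.withDensity (dens d) with hμ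
  -- finiteness of μ A
  have hfin : μ A ≠ ∞ := by
    obtain ⟨R, hR⟩ := hAbd.subset_closedBall 0
    have hRbd : ∀ x ∈ closedBall (0 : EuclideanSpace ℝ (Fin d)) R,
        dens d x ≤ ENNReal.ofReal (Real.exp (d * |R|)) := by
      intro x hx
      apply ENNReal.ofReal_le_ofReal
      apply Real.exp_le_exp.2
      have hxn : ‖x‖ ≤ R := by simpa [dist_eq_norm] using hx
      have : ∀ i, |x i| ≤ |R| := by
        intro i
        calc |x i| = Real.sqrt (‖x i‖^2) := by
              rw [Real.sqrt_sq (norm_nonneg _), Real.norm_eq_abs]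
          _ ≤ ‖x‖ := by
              rw [EuclideanSpace.norm_eq]
              exact Real.sqrt_le_sqrt
                (Finset.single_le_sum (fun j _ => sq_nonneg ‖x j‖) (Finset.mem_univ i))
          _ ≤ |R| := le_trans hxn (le_abs_self R)
      calc ∑ i, |x i| ≤ ∑ _i : Fin d, |R| := Finset.sum_le_sum fun i _ => this i
        _ = d * |R| := by rw [Finset.sum_const, Finset.card_univ, Fintype.card_fin, nsmul_eq_mul]
    have : μ A ≤ ENNReal.ofReal (Real.exp (d * |R|)) * volume (closedBall (0:EuclideanSpace ℝ (Fin d)) R) := by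
      rw [hμ, withDensity_apply _ hAopen.measurableSet]
      calc ∫⁻ x in A, dens d x ∂volume ≤ ∫⁻ x in closedBall 0 R, dens d x ∂volume :=
            lintegral_mono_set hR
        _ ≤ ∫⁻ _x in closedBall (0:EuclideanSpace ℝ (Fin d)) R,
              ENNReal.ofReal (Real.exp (d * |R|)) ∂volume :=
            setLIntegral_mono (by measurability) fun x hx => hRbd x hx
        _ = ENNReal.ofReal (Real.exp (d * |R|)) * volume (closedBall (0:EuclideanSpace ℝ (Fin d)) R) := by
            rw [setLIntegral_const]
    exact ne_top_of_le_ne_top (by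
      exact ENNReal.mul_ne_top ENNReal.ofReal_ne_top (measure_closedBall_lt_top).ne) this
  have hstep : ∀ θ : ℝ, θ ∈ Ioo (0:ℝ) 1 →
      ENNReal.ofReal (Real.sqrt d * θ) * μ A ≤ surfaceMeasure μ A := by
    intro θ hθ
    refine Filter.le_liminf_of_le (by isBoundedDefault) ?_
    filter_upwards [self_mem_nhdsWithin] with ε hεmem
    have hε : (0:ℝ) < ε := hεmem
    have hkey := key d hd A hAopen.measurableSet hθ.1 hθ.2 hε
    set t := Real.sqrt d * (θ * ε) with ht
    have hsd : (0:ℝ) < Real.sqrt d := Real.sqrt_pos.2 (by exact_mod_cast hd)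
    have hθ0 := hθ.1
    have ht0 : 0 < t := by rw [ht]; positivity
    have e1 : ENNReal.ofReal (Real.sqrt d * θ) * μ A
        = (ENNReal.ofReal t * μ A) / ENNReal.ofReal ε := by
      have hne : ENNReal.ofReal ε ≠ 0 := by simp [hε]
      rw [ht, show Real.sqrt d * (θ*ε) = (Real.sqrt d * θ) * ε by ring,
        ENNReal.ofReal_mul (mul_nonneg hsd.le hθ.1.le), mul_right_comm,
        mul_div_assoc, ENNReal.div_self hne ENNReal.ofReal_ne_top, mul_one]
    rw [e1]
    apply ENNReal.div_le_div_right
    apply ENNReal.le_sub_of_add_le_right hfin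
    calc ENNReal.ofReal t * μ A + μ A = (ENNReal.ofReal t + 1) * μ A := by
          rw [add_mul, one_mul]
      _ ≤ ENNReal.ofReal (Real.exp t) * μ A := by
          apply mul_le_mul_left
          rw [show (1:ℝ≥0∞) = ENNReal.ofReal 1 by simp,
            ← ENNReal.ofReal_add ht0.le zero_le_one]
          exact ENNReal.ofReal_le_ofReal (by linarith [Real.add_one_le_exp t])
      _ ≤ μ (thickening ε A) := hkey
  have htend : Tendsto (fun θ : ℝ => ENNReal.ofReal (Real.sqrt d * θ) * μ A) (nhdsWithin 1 (Iio (1:ℝ)))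
      (nhds (ENNReal.ofReal (Real.sqrt d) * μ A)) := by
    have h1 : Tendsto (fun θ : ℝ => ENNReal.ofReal (Real.sqrt d * θ)) (nhdsWithin 1 (Iio (1:ℝ)))
        (nhds (ENNReal.ofReal (Real.sqrt d * 1))) :=
      ((ENNReal.continuous_ofReal.comp (continuous_const.mul continuous_id)).tendsto 1).mono_left
        nhdsWithin_le_nhds
    simpa using ENNReal.Tendsto.mul_const h1 (Or.inr hfin)
  exact le_of_tendsto htend (eventually_of_mem
    (Ioo_mem_nhdsLT_of_mem (by norm_num : (1:ℝ) ∈ Ioc (0:ℝ) 1)) fun θ hθ => hstep θ hθ)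
end

section
/- Let d ≥ 2, α > 1, and let μ be the measure on ℝ^d with density e^{|x|^α} with respect to Lebesgue measure. Then there exists a constant C > 0 (depending on d and α) such that for every bounded open set A ⊂ ℝ^d with smooth boundary satisfying μ(A) ≥ 1, one has μ⁺(∂A) ≥ C · μ(A) · (log μ(A))^{1 − 1/α}. -/
open MeasureTheory Metric Filter Set
open scoped ENNReal

/-- The measure on `ℝ^d` with density `e^{|x|^α}` with respect to Lebesgue measure. -/
noncomputable def expPowMeasure (d : ℕ) (α : ℝ) : Measure (EuclideanSpace ℝ (Fin d)) :=
  volume.withDensity fun x => ENNReal.ofReal (Real.exp (‖x‖ ^ α))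

section Helpers

variable {E : Type*} [NormedAddCommGroup E] [InnerProductSpace ℝ E]

/-- soft-shrink map -/
noncomputable def softShrink (η : ℝ) (y : E) : E := (max (‖y‖ - η) 0 / ‖y‖) • y

lemma norm_softShrink {η : ℝ} (hη : 0 ≤ η) (y : E) :
    ‖softShrink η y‖ = max (‖y‖ - η) 0 := by
  rcases eq_or_ne y 0 with rfl | hy
  · simp [softShrink, hη]
  · have h : 0 < ‖y‖ := norm_pos_iff.2 hy
    rw [softShrink, norm_smul, Real.norm_eq_abs, abs_div, abs_of_nonneg (le_max_right _ _),
      abs_of_pos h, div_mul_cancel₀ _ h.ne']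

lemma lipschitz_softShrink {η : ℝ} (hη : 0 ≤ η) : LipschitzWith 1 (softShrink (E := E) η) := by
  apply LipschitzWith.of_dist_le_mul
  intro x y
  rw [NNReal.coe_one, one_mul, dist_eq_norm, dist_eq_norm]
  -- general case-free helper
  have key : ∀ u v : E, ‖u‖ ≤ η → ‖softShrink η u - softShrink η v‖ ≤ ‖u - v‖ := by
    intro u v hu
    have hu0 : softShrink η u = 0 := by
      have : max (‖u‖ - η) 0 = 0 := max_eq_right (by linarith)
      simp [softShrink, this]
    rw [hu0, zero_sub, norm_neg, norm_softShrink hη]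
    rcases le_or_gt (‖v‖ - η) 0 with h | h
    · rw [max_eq_right h]; exact norm_nonneg _
    · rw [max_eq_left h.le]
      have : ‖v‖ - ‖u‖ ≤ ‖u - v‖ := by
        have := norm_sub_norm_le (v) (u)
        rwa [norm_sub_rev] at this
      linarith
  rcases le_or_gt ‖x‖ η with hx | hx
  · exact key x y hx
  rcases le_or_gt ‖y‖ η with hy | hy
  · rw [norm_sub_rev, norm_sub_rev x]; exact key y x hy
  -- main case
  set a := ‖x‖ with ha
  set b := ‖y‖ with hb
  have ha0 : 0 < a := lt_of_le_of_lt hη hx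
  have hb0 : 0 < b := lt_of_le_of_lt hη hy
  have hmx : max (a - η) 0 = a - η := max_eq_left (by linarith)
  have hmy : max (b - η) 0 = b - η := max_eq_left (by linarith)
  set c := (a - η) / a with hc
  set e := (b - η) / b with he
  have hca : c * a = a - η := div_mul_cancel₀ _ ha0.ne'
  have heb : e * b = b - η := div_mul_cancel₀ _ hb0.ne'
  have hc0 : 0 ≤ c := div_nonneg (by linarith) ha0.le
  have he0 : 0 ≤ e := div_nonneg (by linarith) hb0.le
  have hc1 : c ≤ 1 := by rw [hc, div_le_one ha0]; linarith
  have he1 : e ≤ 1 := by rw [he, div_le_one hb0]; linarith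
  have hx' : softShrink η x = c • x := by rw [softShrink, hmx]
  have hy' : softShrink η y = e • y := by rw [softShrink, hmy]
  rw [hx', hy']
  have ht : inner ℝ x y ≤ a * b := real_inner_le_norm x y
  have sq1 : ‖c • x - e • y‖ ^ 2 = c^2 * a^2 - 2 * (c * e * inner ℝ x y) + e^2 * b^2 := by
    rw [norm_sub_sq_real, real_inner_smul_left, real_inner_smul_right, norm_smul, norm_smul]
    rw [Real.norm_eq_abs, abs_of_nonneg hc0, Real.norm_eq_abs, abs_of_nonneg he0]
    ring
  have sq2 : ‖x - y‖ ^ 2 = a^2 - 2 * inner ℝ x y + b^2 := by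
    rw [norm_sub_sq_real]
  have hsq : ‖c • x - e • y‖ ^ 2 ≤ ‖x - y‖ ^ 2 := by
    rw [sq1, sq2]
    nlinarith [mul_nonneg (mul_nonneg (sub_nonneg.2 (mul_le_one₀ hc1 he0 he1)) hc0)
        (sub_nonneg.2 ht), sub_nonneg.2 ht, mul_nonneg hc0 he0,
      mul_nonneg (sub_nonneg.2 (mul_le_one₀ hc1 he0 he1)) (sub_nonneg.2 ht)]
  nlinarith [norm_nonneg (c • x - e • y), norm_nonneg (x - y), hsq]

lemma volume_image_le_one_lipschitz {d : ℕ}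
    {f : EuclideanSpace ℝ (Fin d) → EuclideanSpace ℝ (Fin d)}
    (hf : LipschitzWith 1 f) (s : Set (EuclideanSpace ℝ (Fin d))) :
    volume (f '' s) ≤ volume s := by
  let F := EuclideanSpace ℝ (Fin d)
  set c : NNReal := (μH[Module.finrank ℝ F] : Measure F).addHaarScalarFactor (volume : Measure F) with hcdef
  have hc : 0 < c := Measure.addHaarScalarFactor_pos_of_isAddHaarMeasure _ _
  have h1 : (μH[Module.finrank ℝ F] : Measure F) = c • (volume : Measure F) :=
    Measure.isAddLeftInvariant_eq_smul _ _
  have h2 := hf.hausdorffMeasure_image_le (d := (Module.finrank ℝ F : ℝ)) (by positivity) s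
  rw [ENNReal.coe_one, ENNReal.one_rpow, one_mul, h1] at h2
  simp only [Measure.smul_apply, smul_eq_mul, ENNReal.smul_def] at h2
  have hc' : (c : ℝ≥0∞) ≠ 0 := by exact_mod_cast hc.ne'
  exact (ENNReal.mul_le_mul_iff_right hc' ENNReal.coe_ne_top).1 h2

noncomputable def expandMap (η : ℝ) (x : E) : E := ((‖x‖ + η) / ‖x‖) • x

lemma norm_expandMap {η : ℝ} (hη : 0 ≤ η) {x : E} (hx : x ≠ 0) :
    ‖expandMap η x‖ = ‖x‖ + η := by
  have h : 0 < ‖x‖ := norm_pos_iff.2 hx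
  rw [expandMap, norm_smul, Real.norm_eq_abs, abs_of_nonneg (by positivity),
    div_mul_cancel₀ _ h.ne']

lemma softShrink_expandMap {η : ℝ} (hη : 0 ≤ η) {x : E} (hx : x ≠ 0) :
    softShrink η (expandMap η x) = x := by
  have h : 0 < ‖x‖ := norm_pos_iff.2 hx
  rw [softShrink, norm_expandMap hη hx, add_sub_cancel_right, max_eq_left h.le, expandMap,
    smul_smul]
  rw [div_mul_div_comm, mul_comm ‖x‖ _, ← div_mul_div_comm, div_self (by positivity), one_mul,
    div_self h.ne', one_smul]

lemma dist_expandMap {η : ℝ} (hη : 0 ≤ η) {x : E} (hx : x ≠ 0) :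
    dist (expandMap η x) x = η := by
  have h : 0 < ‖x‖ := norm_pos_iff.2 hx
  rw [dist_eq_norm, expandMap]
  have : ((‖x‖ + η) / ‖x‖) • x - x = (η / ‖x‖) • x := by
    rw [← one_smul ℝ x, smul_smul, ← sub_smul, one_smul]
    congr 1
    field_simp
    ring
  rw [this, norm_smul, Real.norm_eq_abs, abs_of_nonneg (by positivity),
    div_mul_cancel₀ _ h.ne']

lemma continuousOn_expandMap {η : ℝ} :
    ContinuousOn (expandMap (E := E) η) {x | x ≠ 0} := by
  apply ContinuousOn.smul _ continuousOn_id
  exact ContinuousOn.div (by fun_prop) (by fun_prop)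
    (fun x hx => (norm_pos_iff.2 hx).ne')

lemma injOn_expandMap {η : ℝ} (hη : 0 ≤ η) :
    InjOn (expandMap (E := E) η) {x | x ≠ 0} := by
  intro x hx y hy h
  rw [← softShrink_expandMap hη hx, ← softShrink_expandMap hη hy, h]

lemma volume_le_volume_expandMap {d : ℕ} {η : ℝ} (hη : 0 ≤ η)
    {T : Set (EuclideanSpace ℝ (Fin d))} (hT : ∀ x ∈ T, x ≠ 0) :
    volume T ≤ volume (expandMap η '' T) := by
  have h : T = softShrink η '' (expandMap η '' T) := by
    rw [← Set.image_comp]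
    apply Set.eq_of_subset_of_subset
    · intro x hx
      exact ⟨x, hx, softShrink_expandMap hη (hT x hx)⟩
    · rintro _ ⟨x, hx, rfl⟩
      simpa [Function.comp, softShrink_expandMap hη (hT x hx)] using hx
  calc volume T = volume (softShrink η '' (expandMap η '' T)) := by rw [← h]
    _ ≤ volume (expandMap η '' T) :=
        volume_image_le_one_lipschitz (lipschitz_softShrink hη) _

lemma measurable_expPowDensity (d : ℕ) (α : ℝ) :
    Measurable fun x : EuclideanSpace ℝ (Fin d) => ENNReal.ofReal (Real.exp (‖x‖ ^ α)) := by
  fun_prop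

lemma expPow_le_of_le {d : ℕ} {α : ℝ} (hα : 0 ≤ α) {s : Set (EuclideanSpace ℝ (Fin d))}
    (hs : MeasurableSet s) {r : ℝ} (h : ∀ x ∈ s, ‖x‖ ≤ r) :
    expPowMeasure d α s ≤ ENNReal.ofReal (Real.exp (r ^ α)) * volume s := by
  rw [expPowMeasure, withDensity_apply _ hs]
  calc ∫⁻ x in s, ENNReal.ofReal (Real.exp (‖x‖ ^ α)) ∂volume
      ≤ ∫⁻ _ in s, ENNReal.ofReal (Real.exp (r ^ α)) ∂volume := by
        apply setLIntegral_mono' hs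
        intro x hx
        exact ENNReal.ofReal_le_ofReal (Real.exp_le_exp.2
          (Real.rpow_le_rpow (norm_nonneg _) (h x hx) hα))
    _ = ENNReal.ofReal (Real.exp (r ^ α)) * volume s := setLIntegral_const _ _

lemma le_expPow_of_le {d : ℕ} {α : ℝ} (hα : 0 ≤ α) {s : Set (EuclideanSpace ℝ (Fin d))}
    (hs : MeasurableSet s) {r : ℝ} (hr : 0 ≤ r) (h : ∀ x ∈ s, r ≤ ‖x‖) :
    ENNReal.ofReal (Real.exp (r ^ α)) * volume s ≤ expPowMeasure d α s := by
  rw [expPowMeasure, withDensity_apply _ hs]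
  calc ENNReal.ofReal (Real.exp (r ^ α)) * volume s
      = ∫⁻ _ in s, ENNReal.ofReal (Real.exp (r ^ α)) ∂volume := (setLIntegral_const _ _).symm
    _ ≤ ∫⁻ x in s, ENNReal.ofReal (Real.exp (‖x‖ ^ α)) ∂volume := by
        apply setLIntegral_mono' hs
        intro x hx
        exact ENNReal.ofReal_le_ofReal (Real.exp_le_exp.2
          (Real.rpow_le_rpow hr (h x hx) hα))

lemma scalar_ineq {α ρ r η δ κ : ℝ} (hα : 1 < α) (hρ : 0 < ρ) (hr : ρ ≤ r)
    (hδ : 0 ≤ δ) (hδη : δ < η) (hκ0 : 0 ≤ κ) (hκ : κ ≤ α * ρ ^ (α - 1) * (η - δ)) :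
    (1 + κ) * Real.exp ((r + δ) ^ α) ≤ Real.exp ((r + η) ^ α) := by
  have hrd : 0 < r + δ := by linarith
  obtain ⟨c, hc, hslope⟩ := exists_hasDerivAt_eq_slope (fun s => s ^ α)
    (fun s => α * s ^ (α - 1)) (show r + δ < r + η by linarith)
    ((Real.continuous_rpow_const (by linarith : (0:ℝ) ≤ α)).continuousOn)
    (fun x _ => Real.hasDerivAt_rpow_const (Or.inr hα.le))
  have hΔ : (r + η) ^ α - (r + δ) ^ α = α * c ^ (α - 1) * (η - δ) := by
    have hne : r + η - (r + δ) ≠ 0 := sub_ne_zero_of_ne (ne_of_gt (by linarith))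
    have h2 : α * c ^ (α - 1) * (r + η - (r + δ)) = (r + η) ^ α - (r + δ) ^ α := by
      rw [hslope, div_mul_cancel₀ _ hne]
    rw [← h2]; ring
  have hc' : ρ ^ (α - 1) ≤ c ^ (α - 1) :=
    Real.rpow_le_rpow hρ.le (by linarith [hc.1]) (by linarith)
  have hΔge : κ ≤ (r + η) ^ α - (r + δ) ^ α := by
    rw [hΔ]
    calc κ ≤ α * ρ ^ (α - 1) * (η - δ) := hκ
      _ ≤ α * c ^ (α - 1) * (η - δ) := by
          apply mul_le_mul_of_nonneg_right _ (by linarith)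
          exact mul_le_mul_of_nonneg_left hc' (by linarith)
  calc (1 + κ) * Real.exp ((r + δ) ^ α)
      ≤ (1 + ((r + η) ^ α - (r + δ) ^ α)) * Real.exp ((r + δ) ^ α) := by
        apply mul_le_mul_of_nonneg_right _ (Real.exp_nonneg _)
        linarith
    _ ≤ Real.exp ((r + η) ^ α - (r + δ) ^ α) * Real.exp ((r + δ) ^ α) := by
        apply mul_le_mul_of_nonneg_right _ (Real.exp_nonneg _)
        linarith [Real.add_one_le_exp ((r + η) ^ α - (r + δ) ^ α)]
    _ = Real.exp ((r + η) ^ α) := by rw [← Real.exp_add]; ring_nf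

end Helpers

section Main
variable {d : ℕ} {α : ℝ}

lemma key_step (hα : 1 < α) {A : Set (EuclideanSpace ℝ (Fin d))}
    (hAm : MeasurableSet A) {ρ R ε : ℝ} (hρ : 0 < ρ) (hAR : A ⊆ ball 0 R)
    (hε : 0 < ε) (hε4 : ε ≤ 1 / 4) :
    expPowMeasure d α A
      + ENNReal.ofReal (α / 4 * ρ ^ (α - 1) * ε) * expPowMeasure d α (A \ ball 0 ρ)
      ≤ expPowMeasure d α (thickening ε A) := by
  set μ := expPowMeasure d α with hμdef
  set η := ε / 2 with hηdef
  set δ := ε * ε with hδdef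
  set κ := α / 4 * ρ ^ (α - 1) * ε with hκdef
  have hα0 : (0:ℝ) ≤ α := by linarith
  have hρα : (0:ℝ) ≤ ρ ^ (α - 1) := Real.rpow_nonneg hρ.le _
  have hκ0 : 0 ≤ κ := by positivity
  have hδ0 : 0 < δ := by positivity
  have hδη : δ < η := by nlinarith
  have hηε : η < ε := by simp [hηdef]; linarith
  have hη0 : 0 < η := by positivity
  set N := ⌈R / δ⌉₊ with hNdef
  set r : ℕ → ℝ := fun j => ρ + j * δ with hrdef
  have hρr : ∀ j : ℕ, ρ ≤ r j := fun j => by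
    have : (0:ℝ) ≤ j * δ := by positivity
    simp [hrdef]; linarith
  set S : ℕ → Set (EuclideanSpace ℝ (Fin d)) :=
    fun j => A ∩ {x | r j ≤ ‖x‖ ∧ ‖x‖ < r j + δ} with hSdef
  have hSm : ∀ j, MeasurableSet (S j) := by
    intro j
    exact hAm.inter ((measurableSet_le measurable_const measurable_norm).inter
      (measurableSet_lt measurable_norm measurable_const))
  have hS0 : ∀ j, ∀ x ∈ S j, x ≠ 0 := by
    intro j x hx
    have : ρ ≤ ‖x‖ := le_trans (hρr j) hx.2.1
    intro h0; rw [h0] at this; simp at this; linarith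
  set B : ℕ → Set (EuclideanSpace ℝ (Fin d)) := fun j => expandMap η '' S j with hBdef
  have hBm : ∀ j, MeasurableSet (B j) := by
    intro j
    exact (hSm j).image_of_continuousOn_injOn
      (continuousOn_expandMap.mono (hS0 j)) ((injOn_expandMap hη0.le).mono (hS0 j))
  have hBnorm : ∀ j, ∀ y ∈ B j, r j + η ≤ ‖y‖ ∧ ‖y‖ < r j + δ + η := by
    rintro j y ⟨x, hx, rfl⟩
    rw [norm_expandMap hη0.le (hS0 j x hx)]
    exact ⟨by linarith [hx.2.1], by linarith [hx.2.2]⟩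
  have hBsub : ∀ j, B j ⊆ thickening ε A := by
    rintro j y ⟨x, hx, rfl⟩
    rw [mem_thickening_iff]
    exact ⟨x, hx.1, by rw [dist_expandMap hη0.le (hS0 j x hx)]; exact hηε⟩
  set Ann : ℕ → Set (EuclideanSpace ℝ (Fin d)) :=
    fun j => {x | r j + η ≤ ‖x‖ ∧ ‖x‖ < r j + δ + η} with hAnnDef
  have hAnnM : ∀ j, MeasurableSet (Ann j) :=
    fun j => (measurableSet_le measurable_const measurable_norm).inter
      (measurableSet_lt measurable_norm measurable_const)
  have hBAnn : ∀ j, B j ⊆ Ann j := fun j y hy => hBnorm j y hy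
  have hrmono : ∀ i j : ℕ, i < j → r i + δ ≤ r j := by
    intro i j hij
    have : ((i:ℝ) + 1) * δ ≤ (j:ℝ) * δ := by
      apply mul_le_mul_of_nonneg_right _ hδ0.le
      exact_mod_cast Nat.succ_le_of_lt hij
    simp only [hrdef]; nlinarith
  have hAnnDisj : ∀ i j : ℕ, i ≠ j → Disjoint (Ann i) (Ann j) := by
    have key : ∀ i j : ℕ, i < j → Disjoint (Ann i) (Ann j) := by
      intro i j hij
      rw [Set.disjoint_left]
      rintro x ⟨-, hx2⟩ ⟨hx3, -⟩
      have := hrmono i j hij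
      linarith
    intro i j hij
    rcases hij.lt_or_gt with h | h
    · exact key i j h
    · exact (key j i h).symm
  set T := A \ ball (0:EuclideanSpace ℝ (Fin d)) ρ with hTdef
  have hTm : MeasurableSet T := hAm.diff measurableSet_ball
  -- coverage
  have hTcover : T ⊆ ⋃ j ∈ Finset.range N, S j := by
    intro x hx
    have hxρ : ρ ≤ ‖x‖ := by
      have := hx.2
      rw [mem_ball_zero_iff] at this
      linarith [not_lt.1 this]
    have hxR : ‖x‖ < R := by
      have := hAR hx.1
      rwa [mem_ball_zero_iff] at this
    set j := ⌊(‖x‖ - ρ) / δ⌋₊ with hjdef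
    have hj1 : (j:ℝ) ≤ (‖x‖ - ρ) / δ := Nat.floor_le (div_nonneg (by linarith) hδ0.le)
    have hj2 : (‖x‖ - ρ) / δ < (j:ℝ) + 1 := Nat.lt_floor_add_one _
    have hj1' : (j:ℝ) * δ ≤ ‖x‖ - ρ := (le_div_iff₀ hδ0).1 hj1
    have hj2' : ‖x‖ - ρ < ((j:ℝ) + 1) * δ := (div_lt_iff₀ hδ0).1 hj2
    have hjN : j < N := by
      have h2 : (‖x‖ - ρ) / δ < R / δ := by gcongr; linarith
      have h3 : (j:ℝ) < (N:ℝ) := lt_of_le_of_lt hj1 (lt_of_lt_of_le h2 (Nat.le_ceil _))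
      exact_mod_cast h3
    refine Set.mem_biUnion (Finset.mem_range.2 hjN) ⟨hx.1, ?_, ?_⟩
    · show r j ≤ ‖x‖
      simp only [hrdef]; linarith
    · show ‖x‖ < r j + δ
      simp only [hrdef]; linarith
  -- per-annulus core inequality
  have hκle : κ ≤ α * ρ ^ (α - 1) * (η - δ) := by
    have hq : ε / 4 ≤ η - δ := by
      simp only [hηdef, hδdef]
      nlinarith [mul_le_mul_of_nonneg_left hε4 hε.le]
    calc κ = α * ρ ^ (α - 1) * (ε / 4) := by rw [hκdef]; ring
      _ ≤ α * ρ ^ (α - 1) * (η - δ) :=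
          mul_le_mul_of_nonneg_left hq (mul_nonneg hα0 hρα)
  have hcore : ∀ j, ENNReal.ofReal κ * μ (S j) + μ (S j) ≤ μ (B j) := by
    intro j
    have hup : μ (S j) ≤ ENNReal.ofReal (Real.exp ((r j + δ) ^ α)) * volume (S j) :=
      expPow_le_of_le hα0 (hSm j) (fun x hx => hx.2.2.le)
    have hvol : volume (S j) ≤ volume (B j) :=
      volume_le_volume_expandMap hη0.le (hS0 j)
    have hrη0 : (0:ℝ) ≤ r j + η := by linarith [hρr j]
    have hlo : ENNReal.ofReal (Real.exp ((r j + η) ^ α)) * volume (B j) ≤ μ (B j) :=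
      le_expPow_of_le hα0 (hBm j) hrη0 (fun y hy => (hBnorm j y hy).1)
    have hsc : (1 + κ) * Real.exp ((r j + δ) ^ α) ≤ Real.exp ((r j + η) ^ α) :=
      scalar_ineq hα hρ (hρr j) hδ0.le hδη hκ0 hκle
    have hco : (ENNReal.ofReal κ + 1) * ENNReal.ofReal (Real.exp ((r j + δ) ^ α))
        = ENNReal.ofReal ((1 + κ) * Real.exp ((r j + δ) ^ α)) := by
      rw [ENNReal.ofReal_mul (by linarith : (0:ℝ) ≤ 1 + κ), ENNReal.ofReal_add zero_le_one hκ0,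
        ENNReal.ofReal_one, add_comm]
    calc ENNReal.ofReal κ * μ (S j) + μ (S j)
        = (ENNReal.ofReal κ + 1) * μ (S j) := by rw [add_mul, one_mul]
      _ ≤ (ENNReal.ofReal κ + 1) * (ENNReal.ofReal (Real.exp ((r j + δ) ^ α)) * volume (S j)) :=
          mul_le_mul_right hup _
      _ = ((ENNReal.ofReal κ + 1) * ENNReal.ofReal (Real.exp ((r j + δ) ^ α))) * volume (S j) := by
          rw [mul_assoc]
      _ = ENNReal.ofReal ((1 + κ) * Real.exp ((r j + δ) ^ α)) * volume (S j) := by rw [hco]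
      _ ≤ ENNReal.ofReal (Real.exp ((r j + η) ^ α)) * volume (S j) :=
          mul_le_mul_left (ENNReal.ofReal_le_ofReal hsc) _
      _ ≤ ENNReal.ofReal (Real.exp ((r j + η) ^ α)) * volume (B j) :=
          mul_le_mul_right hvol _
      _ ≤ μ (B j) := hlo
  -- measure-theoretic bookkeeping
  have hDm : ∀ j, MeasurableSet (B j \ A) := fun j => (hBm j).diff hAm
  have hBD : ∀ j, μ (B j) ≤ μ (B j \ A) + μ (A ∩ Ann j) := by
    intro j
    refine (measure_mono ?_).trans (measure_union_le _ _)
    intro y hy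
    by_cases hyA : y ∈ A
    · exact Or.inr ⟨hyA, hBAnn j hy⟩
    · exact Or.inl ⟨hy, hyA⟩
  have hsum1 : μ A + ∑ j ∈ Finset.range N, μ (B j \ A) ≤ μ (thickening ε A) := by
    have hdisjD : (↑(Finset.range N) : Set ℕ).PairwiseDisjoint (fun j => B j \ A) :=
      fun i _ j _ hij => (hAnnDisj i j hij).mono
        (Set.diff_subset.trans (hBAnn i)) (Set.diff_subset.trans (hBAnn j))
    have hU : μ (⋃ j ∈ Finset.range N, (B j \ A)) = ∑ j ∈ Finset.range N, μ (B j \ A) :=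
      measure_biUnion_finset hdisjD (fun j _ => hDm j)
    have hdisjA : Disjoint A (⋃ j ∈ Finset.range N, (B j \ A)) := by
      rw [Set.disjoint_right]
      intro a ha
      simp only [Set.mem_iUnion] at ha
      obtain ⟨j, -, -, hnA⟩ := ha
      exact hnA
    rw [← hU, ← measure_union hdisjA (Finset.measurableSet_biUnion _ (fun j _ => hDm j))]
    apply measure_mono
    apply Set.union_subset (self_subset_thickening hε A)
    exact Set.iUnion₂_subset fun j _ => Set.diff_subset.trans (hBsub j)
  have hAnnsum : ∑ j ∈ Finset.range N, μ (A ∩ Ann j) ≤ μ T := by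
    have hdisj : (↑(Finset.range N) : Set ℕ).PairwiseDisjoint (fun j => A ∩ Ann j) :=
      fun i _ j _ hij => (hAnnDisj i j hij).mono Set.inter_subset_right Set.inter_subset_right
    rw [← measure_biUnion_finset hdisj (fun j _ => hAm.inter (hAnnM j))]
    apply measure_mono
    apply Set.iUnion₂_subset
    intro j _ x hx
    refine ⟨hx.1, ?_⟩
    simp only [mem_ball_zero_iff, not_lt]
    linarith [hx.2.1, hρr j]
  have hTsum : μ T ≤ ∑ j ∈ Finset.range N, μ (S j) :=
    (measure_mono hTcover).trans (measure_biUnion_finset_le _ _)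
  have hTfin : μ T ≠ ⊤ := by
    have h1 : μ T ≤ ENNReal.ofReal (Real.exp ((max R 0) ^ α)) * volume T := by
      apply expPow_le_of_le hα0 hTm
      intro x hx
      have := hAR hx.1
      rw [mem_ball_zero_iff] at this
      exact this.le.trans (le_max_left _ _)
    refine ne_top_of_le_ne_top ?_ h1
    refine ENNReal.mul_ne_top ENNReal.ofReal_ne_top ?_
    have : volume T ≤ volume (ball (0:EuclideanSpace ℝ (Fin d)) R) :=
      measure_mono (fun x hx => hAR hx.1)
    exact ne_top_of_le_ne_top measure_ball_lt_top.ne this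
  have hchain : ENNReal.ofReal κ * μ T + μ T
      ≤ (∑ j ∈ Finset.range N, μ (B j \ A)) + μ T := by
    calc ENNReal.ofReal κ * μ T + μ T
        ≤ ENNReal.ofReal κ * (∑ j ∈ Finset.range N, μ (S j))
            + ∑ j ∈ Finset.range N, μ (S j) :=
          add_le_add (mul_le_mul_right hTsum _) hTsum
      _ = ∑ j ∈ Finset.range N, (ENNReal.ofReal κ * μ (S j) + μ (S j)) := by
          rw [Finset.mul_sum, Finset.sum_add_distrib]
      _ ≤ ∑ j ∈ Finset.range N, μ (B j) := Finset.sum_le_sum (fun j _ => hcore j)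
      _ ≤ ∑ j ∈ Finset.range N, (μ (B j \ A) + μ (A ∩ Ann j)) :=
          Finset.sum_le_sum (fun j _ => hBD j)
      _ = (∑ j ∈ Finset.range N, μ (B j \ A)) + ∑ j ∈ Finset.range N, μ (A ∩ Ann j) :=
          Finset.sum_add_distrib
      _ ≤ (∑ j ∈ Finset.range N, μ (B j \ A)) + μ T := add_le_add_right hAnnsum _
  have hfinal : ENNReal.ofReal κ * μ T ≤ ∑ j ∈ Finset.range N, μ (B j \ A) :=
    (ENNReal.add_le_add_iff_right hTfin).1 hchain
  calc μ A + ENNReal.ofReal κ * μ T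
      ≤ μ A + ∑ j ∈ Finset.range N, μ (B j \ A) := add_le_add_right hfinal _
    _ ≤ μ (thickening ε A) := hsum1


lemma key_surface (hα : 1 < α) {A : Set (EuclideanSpace ℝ (Fin d))}
    (hAb : Bornology.IsBounded A) (hAo : IsOpen A) {ρ : ℝ} (hρ : 0 < ρ) :
    ENNReal.ofReal (α / 4 * ρ ^ (α - 1)) * expPowMeasure d α (A \ ball 0 ρ)
      ≤ surfaceMeasure (expPowMeasure d α) A := by
  obtain ⟨R, hR⟩ := hAb.subset_ball 0
  set μ := expPowMeasure d α with hμdef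
  rw [surfaceMeasure]
  apply Filter.le_liminf_of_le (by isBoundedDefault)
  have hmem : Ioc (0:ℝ) (1/4) ∈ nhdsWithin (0:ℝ) (Set.Ioi 0) :=
    Ioc_mem_nhdsGT_of_mem (Set.left_mem_Ico.2 (by norm_num))
  filter_upwards [hmem] with ε hε
  obtain ⟨hε0, hε4⟩ := hε
  have hc0 : (0:ℝ) ≤ α / 4 * ρ ^ (α - 1) :=
    mul_nonneg (by linarith) (Real.rpow_nonneg hρ.le _)
  have G := key_step hα hAo.measurableSet hρ hR hε0 hε4
  have hAfin : μ A ≠ ⊤ := by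
    have h1 : μ A ≤ ENNReal.ofReal (Real.exp ((max R 0) ^ α)) * volume A := by
      apply expPow_le_of_le (by linarith) hAo.measurableSet
      intro x hx
      have := hR hx
      rw [mem_ball_zero_iff] at this
      exact this.le.trans (le_max_left _ _)
    refine ne_top_of_le_ne_top (ENNReal.mul_ne_top ENNReal.ofReal_ne_top ?_) h1
    exact ne_top_of_le_ne_top measure_ball_lt_top.ne (measure_mono hR)
  have h1 : ENNReal.ofReal (α / 4 * ρ ^ (α - 1) * ε) * μ (A \ ball 0 ρ)
      ≤ μ (thickening ε A) - μ A := ENNReal.le_sub_of_add_le_left hAfin G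
  have h2 : ENNReal.ofReal (α / 4 * ρ ^ (α - 1) * ε) * μ (A \ ball 0 ρ) / ENNReal.ofReal ε
      = ENNReal.ofReal (α / 4 * ρ ^ (α - 1)) * μ (A \ ball 0 ρ) := by
    rw [ENNReal.ofReal_mul hc0, mul_comm (ENNReal.ofReal (α / 4 * ρ ^ (α - 1)))
      (ENNReal.ofReal ε), mul_assoc, mul_comm (ENNReal.ofReal ε), mul_div_assoc,
      ENNReal.div_self (by simpa using hε0) ENNReal.ofReal_ne_top, mul_one]
  rw [← h2]
  exact ENNReal.div_le_div_right h1 _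

lemma expPow_ball_le (hd : 0 < d) (hα0 : 0 ≤ α) {ρ : ℝ} (hρ : 0 ≤ ρ) :
    expPowMeasure d α (ball 0 ρ)
      ≤ ENNReal.ofReal (Real.exp (ρ ^ α) * (ρ ^ d *
          (volume (ball (0:EuclideanSpace ℝ (Fin d)) 1)).toReal)) := by
  haveI : Nontrivial (EuclideanSpace ℝ (Fin d)) :=
    ⟨0, EuclideanSpace.single ⟨0, hd⟩ (1:ℝ), fun h => by
      have := congrArg (fun v : EuclideanSpace ℝ (Fin d) => v ⟨0, hd⟩) h
      simp [EuclideanSpace.single_apply] at this⟩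
  have h1 : expPowMeasure d α (ball 0 ρ)
      ≤ ENNReal.ofReal (Real.exp (ρ ^ α)) * volume (ball (0:EuclideanSpace ℝ (Fin d)) ρ) :=
    expPow_le_of_le hα0 measurableSet_ball (fun x hx => (mem_ball_zero_iff.1 hx).le)
  have h2 : volume (ball (0:EuclideanSpace ℝ (Fin d)) ρ)
      = ENNReal.ofReal (ρ ^ d) * volume (ball (0:EuclideanSpace ℝ (Fin d)) 1) := by
    rw [Measure.addHaar_ball _ _ hρ, finrank_euclideanSpace_fin]
  have h3 : volume (ball (0:EuclideanSpace ℝ (Fin d)) 1)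
      = ENNReal.ofReal ((volume (ball (0:EuclideanSpace ℝ (Fin d)) 1)).toReal) :=
    (ENNReal.ofReal_toReal measure_ball_lt_top.ne).symm
  calc expPowMeasure d α (ball 0 ρ)
      ≤ ENNReal.ofReal (Real.exp (ρ ^ α)) * volume (ball (0:EuclideanSpace ℝ (Fin d)) ρ) := h1
    _ = ENNReal.ofReal (Real.exp (ρ ^ α)) * (ENNReal.ofReal (ρ ^ d)
          * ENNReal.ofReal ((volume (ball (0:EuclideanSpace ℝ (Fin d)) 1)).toReal)) := by
        rw [h2, ← h3]
    _ = ENNReal.ofReal (Real.exp (ρ ^ α) * (ρ ^ d *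
          (volume (ball (0:EuclideanSpace ℝ (Fin d)) 1)).toReal)) := by
        rw [← ENNReal.ofReal_mul (by positivity), ← ENNReal.ofReal_mul (Real.exp_nonneg _)]

theorem main (d : ℕ) (hd : 2 ≤ d) (α : ℝ) (hα : 1 < α) :
    ∃ C : ℝ, 0 < C ∧ ∀ A : Set (EuclideanSpace ℝ (Fin d)),
      Bornology.IsBounded A → IsOpen A →
      1 ≤ expPowMeasure d α A →
      ENNReal.ofReal (C * (expPowMeasure d α A).toReal *
          Real.log ((expPowMeasure d α A).toReal) ^ (1 - 1 / α)) ≤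
        surfaceMeasure (expPowMeasure d α) A := by
  have hα0 : (0:ℝ) ≤ α := by linarith
  have hαne : α ≠ 0 := by linarith
  have hd0 : 0 < d := by omega
  haveI : Nontrivial (EuclideanSpace ℝ (Fin d)) :=
    ⟨0, EuclideanSpace.single ⟨0, hd0⟩ (1:ℝ), fun h => by
      have := congrArg (fun v : EuclideanSpace ℝ (Fin d) => v ⟨0, hd0⟩) h
      simp [EuclideanSpace.single_apply] at this⟩
  have he0 : 0 < 1 - 1/α := by
    have : 1/α < 1 := by rw [div_lt_one (by linarith)]; linarith
    linarith
  have he1 : 1 - 1/α ≤ 1 := by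
    have : 0 < 1/α := by positivity
    linarith
  set e := 1 - 1/α with hedef
  set cV := (volume (ball (0:EuclideanSpace ℝ (Fin d)) 1)).toReal with hcVdef
  have hcV0 : 0 < cV :=
    ENNReal.toReal_pos (measure_ball_pos _ _ one_pos).ne' measure_ball_lt_top.ne
  -- small radius with mass ≤ 1/2
  set ρ₀ := min 1 (1 / (2 * Real.exp 1 * cV)) with hρ₀def
  have hρ₀0 : 0 < ρ₀ := lt_min one_pos (by positivity)
  have hρ₀1 : ρ₀ ≤ 1 := min_le_left _ _
  have hsmall : expPowMeasure d α (ball 0 ρ₀) ≤ ENNReal.ofReal (1/2) := by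
    refine (expPow_ball_le hd0 hα0 hρ₀0.le).trans (ENNReal.ofReal_le_ofReal ?_)
    have h1 : Real.exp (ρ₀ ^ α) ≤ Real.exp 1 :=
      Real.exp_le_exp.2 (Real.rpow_le_one hρ₀0.le hρ₀1 hα0)
    have h2 : ρ₀ ^ d ≤ ρ₀ := pow_le_of_le_one hρ₀0.le hρ₀1 (by omega)
    have h3 : ρ₀ ≤ 1 / (2 * Real.exp 1 * cV) := min_le_right _ _
    have h4 : Real.exp (ρ₀ ^ α) * (ρ₀ ^ d * cV) ≤ Real.exp 1 * (ρ₀ * cV) := by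
      apply mul_le_mul h1 (mul_le_mul_of_nonneg_right h2 hcV0.le) (by positivity)
        (Real.exp_nonneg _)
    refine h4.trans ?_
    rw [← mul_assoc]
    calc Real.exp 1 * ρ₀ * cV ≤ Real.exp 1 * (1 / (2 * Real.exp 1 * cV)) * cV := by
          apply mul_le_mul_of_nonneg_right (mul_le_mul_of_nonneg_left h3 (Real.exp_nonneg _))
            hcV0.le
      _ = 1/2 := by field_simp
  -- threshold s₀
  have hev : ∀ᶠ s in atTop, cV * ((s/2) ^ (1/α)) ^ d * Real.exp (s/2)
      ≤ (1/2) * Real.exp s := by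
    have htend : Tendsto (fun s : ℝ => (s/2) ^ d * Real.exp (-(s/2))) atTop (nhds 0) := by
      have h1 : Tendsto (fun s : ℝ => s/2) atTop atTop :=
        tendsto_id.atTop_div_const (by norm_num)
      exact (Real.tendsto_pow_mul_exp_neg_atTop_nhds_zero d).comp h1
    have hevlt : ∀ᶠ s in atTop, (s/2) ^ d * Real.exp (-(s/2)) < 1/(2*cV) :=
      htend.eventually_lt_const (by positivity)
    filter_upwards [hevlt, eventually_ge_atTop (2:ℝ)] with s hs h2s
    have hs2 : (1:ℝ) ≤ s/2 := by linarith
    have hbase : (s/2) ^ (1/α) ≤ s/2 := by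
      calc (s/2) ^ (1/α) ≤ (s/2) ^ (1:ℝ) :=
            Real.rpow_le_rpow_of_exponent_le hs2 (by rw [div_le_one (by linarith)]; linarith)
        _ = s/2 := Real.rpow_one _
    have hpow : ((s/2) ^ (1/α)) ^ d ≤ (s/2) ^ d :=
      pow_le_pow_left₀ (Real.rpow_nonneg (by linarith) _) hbase d
    have hexp0 : (0:ℝ) < Real.exp (s/2) := Real.exp_pos _
    have key : cV * (s/2) ^ d ≤ (1/2) * Real.exp (s/2) := by
      have h5 : cV * ((s/2) ^ d * Real.exp (-(s/2))) ≤ cV * (1/(2*cV)) :=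
        mul_le_mul_of_nonneg_left hs.le hcV0.le
      have h6 : cV * (1/(2*cV)) = 1/2 := by field_simp
      have h7 : cV * ((s/2) ^ d * Real.exp (-(s/2))) * Real.exp (s/2) = cV * (s/2) ^ d := by
        rw [Real.exp_neg]
        field_simp
      calc cV * (s/2) ^ d = cV * ((s/2) ^ d * Real.exp (-(s/2))) * Real.exp (s/2) := h7.symm
        _ ≤ (1/2) * Real.exp (s/2) := by
            apply mul_le_mul_of_nonneg_right _ hexp0.le
            rw [← h6]; exact h5
    calc cV * ((s/2) ^ (1/α)) ^ d * Real.exp (s/2)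
        ≤ cV * (s/2) ^ d * Real.exp (s/2) := by
          apply mul_le_mul_of_nonneg_right (mul_le_mul_of_nonneg_left hpow hcV0.le) hexp0.le
      _ ≤ (1/2) * Real.exp (s/2) * Real.exp (s/2) :=
          mul_le_mul_of_nonneg_right key hexp0.le
      _ = (1/2) * Real.exp s := by
          rw [mul_assoc, ← Real.exp_add]
          norm_num
  obtain ⟨s₁, hs₁⟩ := eventually_atTop.1 hev
  set s₀ := max s₁ 1 with hs₀def
  have hs₀1 : (1:ℝ) ≤ s₀ := le_max_right _ _
  have hs₀0 : (0:ℝ) < s₀ := by linarith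
  -- the constant
  set c₁ := α/16 with hc₁def
  set c₂ := α/8 * ρ₀ ^ (α-1) * (s₀ ^ e)⁻¹ with hc₂def
  have hs₀e : 0 < s₀ ^ e := Real.rpow_pos_of_pos hs₀0 _
  have hρ₀α : 0 < ρ₀ ^ (α-1) := Real.rpow_pos_of_pos hρ₀0 _
  have hc₁0 : 0 < c₁ := by rw [hc₁def]; linarith
  have hc₂0 : 0 < c₂ := by positivity
  refine ⟨min c₁ c₂, lt_min hc₁0 hc₂0, ?_⟩
  intro A hAb hAo hM1
  set μ := expPowMeasure d α with hμdef
  set M := μ A with hMdef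
  set Mr := M.toReal with hMrdef
  have hMfin : M ≠ ⊤ := by
    obtain ⟨R, hR⟩ := hAb.subset_ball 0
    have h1 : μ A ≤ ENNReal.ofReal (Real.exp ((max R 0) ^ α)) * volume A := by
      apply expPow_le_of_le hα0 hAo.measurableSet
      intro x hx
      have := hR hx
      rw [mem_ball_zero_iff] at this
      exact this.le.trans (le_max_left _ _)
    refine ne_top_of_le_ne_top (ENNReal.mul_ne_top ENNReal.ofReal_ne_top ?_) h1
    exact ne_top_of_le_ne_top measure_ball_lt_top.ne (measure_mono hR)
  have hMr1 : 1 ≤ Mr := by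
    rw [hMrdef, ← ENNReal.toReal_one]
    exact ENNReal.toReal_le_toReal (by simp) hMfin |>.2 hM1
  have hMr0 : 0 < Mr := by linarith
  have hMofReal : ENNReal.ofReal Mr = M := ENNReal.ofReal_toReal hMfin
  set L := Real.log Mr with hLdef
  have hL0 : 0 ≤ L := Real.log_nonneg hMr1
  have hM2fin : M/2 ≠ ⊤ := by
    simp [ENNReal.div_eq_top, hMfin]
  have hhalf : ∀ ρ' : ℝ, μ (ball 0 ρ') ≤ M/2 → M/2 ≤ μ (A \ ball 0 ρ') := by
    intro ρ' hb
    have h1 : M ≤ μ (A \ ball 0 ρ') + M/2 := by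
      calc M ≤ μ (A ∩ ball 0 ρ') + μ (A \ ball 0 ρ') := measure_le_inter_add_diff _ _ _
        _ ≤ μ (ball 0 ρ') + μ (A \ ball 0 ρ') := by
            exact add_le_add_left (measure_mono Set.inter_subset_right) _
        _ ≤ M/2 + μ (A \ ball 0 ρ') := add_le_add_left hb _
        _ = μ (A \ ball 0 ρ') + M/2 := add_comm _ _
    have h2 : M/2 + M/2 ≤ μ (A \ ball 0 ρ') + M/2 := by
      rw [ENNReal.add_halves]; exact h1
    exact (ENNReal.add_le_add_iff_right hM2fin).1 h2
  -- common final step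
  have hfinish : ∀ ρ' : ℝ, 0 < ρ' → μ (ball 0 ρ') ≤ M/2 →
      min c₁ c₂ * Mr * L ^ e ≤ α/4 * ρ' ^ (α-1) * (Mr/2) →
      ENNReal.ofReal (min c₁ c₂ * Mr * L ^ e) ≤ surfaceMeasure μ A := by
    intro ρ' hρ' hball hreal
    have hkey := key_surface hα hAb hAo hρ'
    have hstep : ENNReal.ofReal (α/4 * ρ' ^ (α-1) * (Mr/2))
        ≤ ENNReal.ofReal (α/4 * ρ' ^ (α-1)) * μ (A \ ball 0 ρ') := by
      have hc0' : (0:ℝ) ≤ α/4 * ρ' ^ (α-1) :=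
        mul_nonneg (by linarith) (Real.rpow_nonneg hρ'.le _)
      calc ENNReal.ofReal (α/4 * ρ' ^ (α-1) * (Mr/2))
          = ENNReal.ofReal (α/4 * ρ' ^ (α-1)) * ENNReal.ofReal (Mr/2) :=
            ENNReal.ofReal_mul hc0'
        _ ≤ ENNReal.ofReal (α/4 * ρ' ^ (α-1)) * (M/2) := by
            apply mul_le_mul_right
            rw [ENNReal.ofReal_div_of_pos (by norm_num), ENNReal.ofReal_ofNat, hMofReal]
        _ ≤ ENNReal.ofReal (α/4 * ρ' ^ (α-1)) * μ (A \ ball 0 ρ') :=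
            mul_le_mul_right (hhalf ρ' hball) _
    exact le_trans (le_trans (ENNReal.ofReal_le_ofReal hreal) hstep) hkey
  rcases le_or_gt L s₀ with hL | hL
  · -- small mass case
    apply hfinish ρ₀ hρ₀0
    · refine hsmall.trans ?_
      have h12 : ENNReal.ofReal (1/2 : ℝ) = 1/2 := by
        rw [ENNReal.ofReal_div_of_pos (by norm_num)]; norm_num
      rw [h12]
      exact ENNReal.div_le_div_right hM1 _
    · have hLe : L ^ e ≤ s₀ ^ e := Real.rpow_le_rpow hL0 hL he0.le
      have hmin : min c₁ c₂ ≤ c₂ := min_le_right _ _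
      calc min c₁ c₂ * Mr * L ^ e ≤ c₂ * Mr * s₀ ^ e := by
            apply mul_le_mul (mul_le_mul_of_nonneg_right hmin (by linarith)) hLe
              (Real.rpow_nonneg hL0 _)
            positivity
        _ = α/8 * ρ₀ ^ (α-1) * Mr := by
            rw [hc₂def]
            field_simp
        _ = α/4 * ρ₀ ^ (α-1) * (Mr/2) := by ring
  · -- large mass case
    set ρ := (L/2) ^ (1/α) with hρdef
    have hL20 : 0 < L/2 := by linarith
    have hρ0 : 0 < ρ := Real.rpow_pos_of_pos hL20 _
    have hρα : ρ ^ α = L/2 := by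
      rw [hρdef, ← Real.rpow_mul hL20.le, one_div, inv_mul_cancel₀ hαne, Real.rpow_one]
    have hs₁L : s₁ ≤ L := le_trans (le_max_left _ _) hL.le
    have hP := hs₁ L hs₁L
    have hexpL : Real.exp L = Mr := Real.exp_log hMr0
    have hballρ : μ (ball 0 ρ) ≤ M/2 := by
      refine (expPow_ball_le hd0 hα0 hρ0.le).trans ?_
      have hkey : Real.exp (ρ ^ α) * (ρ ^ d * cV) ≤ Mr/2 := by
        rw [hρα]
        rw [hexpL] at hP
        calc Real.exp (L/2) * (ρ ^ d * cV)
            = cV * ((L/2) ^ (1/α)) ^ d * Real.exp (L/2) := by rw [hρdef]; ring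
          _ ≤ 1/2 * Mr := hP
          _ = Mr/2 := by ring
      calc ENNReal.ofReal (Real.exp (ρ ^ α) * (ρ ^ d * cV))
          ≤ ENNReal.ofReal (Mr/2) := ENNReal.ofReal_le_ofReal hkey
        _ = M/2 := by
            rw [ENNReal.ofReal_div_of_pos (by norm_num), hMofReal]
            norm_num
    apply hfinish ρ hρ0 hballρ
    have hρe : ρ ^ (α-1) = (L/2) ^ e := by
      rw [hρdef, ← Real.rpow_mul hL20.le]
      congr 1
      rw [hedef]
      field_simp
    have h2le : (2:ℝ) ^ e ≤ 2 := by
      calc (2:ℝ) ^ e ≤ (2:ℝ) ^ (1:ℝ) := Real.rpow_le_rpow_of_exponent_le one_le_two he1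
        _ = 2 := Real.rpow_one 2
    have hLe2 : L ^ e / 2 ≤ (L/2) ^ e := by
      rw [Real.div_rpow hL0 (by norm_num : (0:ℝ) ≤ 2)]
      exact div_le_div_of_nonneg_left (Real.rpow_nonneg hL0 _)
        (Real.rpow_pos_of_pos two_pos _) h2le
    have hmin1 : min c₁ c₂ ≤ c₁ := min_le_left _ _
    calc min c₁ c₂ * Mr * L ^ e ≤ c₁ * Mr * L ^ e := by
          apply mul_le_mul_of_nonneg_right (mul_le_mul_of_nonneg_right hmin1 (by linarith))
            (Real.rpow_nonneg hL0 _)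
      _ = α/8 * Mr * (L ^ e / 2) := by rw [hc₁def]; ring
      _ ≤ α/8 * Mr * ((L/2) ^ e) := by
          apply mul_le_mul_of_nonneg_left hLe2
          apply mul_nonneg (by linarith) (by linarith)
      _ = α/4 * ρ ^ (α-1) * (Mr/2) := by rw [hρe]; ring

end Main

theorem stmt_9 (d : ℕ) (hd : 2 ≤ d) (α : ℝ) (hα : 1 < α) :
    ∃ C : ℝ, 0 < C ∧ ∀ A : Set (EuclideanSpace ℝ (Fin d)),
      Bornology.IsBounded A → IsOpen A → HasSmoothBoundary A →
      1 ≤ expPowMeasure d α A →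
      ENNReal.ofReal (C * (expPowMeasure d α A).toReal *
          Real.log ((expPowMeasure d α A).toReal) ^ (1 - 1 / α)) ≤
        surfaceMeasure (expPowMeasure d α) A := by
  obtain ⟨C, hC, h⟩ := main d hd α hα
  exact ⟨C, hC, fun A hb ho _ hm => h A hb ho hm⟩
end
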